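/- For d, d' diagrams in the affine symmetric TL basis B^φ_{2m}: (1) the number of propagating lines satisfies #(dd') ≤ #(d); (2) if #(dd') = #(d) then the inner-region colour satisfies c_i(dd') = c_i(d). -/
import Mathlib


/-!
STATEMENT 15.
For basic diagrams `d, d'` of the affine symmetric TL algebra `b^φ_{2m}` (modelled by
their fundamental strips), with composition `dd'` given by concatenation followed by
feature reduction:  (1) the number of propagating lines satisfies `#(dd') ≤ #(d)`;
(2) if `#(dd') = #(d)` then the colour of the inner region is preserved,
`c_i(dd') = c_i(d)`.  The number of propagating lines is the number of northern points
joined to southern points, and the inner region (bounded by the innermost mirror pair of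
propagating lines and containing a segment of the `0`-reflection line) is white iff the
number of northern `0`-wall exits is even.  The composite is characterised as any strip
diagram whose destination function and belt number realise the boundary connectivity of
the concatenation (`IsSComposite`).
-/

open scoped Classical

/-- Destination of a boundary point of a diagram drawn in the fundamental strip (between
the `0`-reflection wall `W` and the `1`-reflection wall `E`) of an affine symmetric
(periodic, left-right symmetric) Temperley–Lieb diagram: it is joined to another boundary
point, or exits through the `0`-wall (west) or the `1`-wall (east). -/
inductive SDest : Type
  | pt (j : ℕ) : SDest
  | west : SDest
  | east : SDest
deriving DecidableEq

/-- A strip diagram with `m` northern and `m` southern boundary points (circle indexing: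
top `0, …, m−1` left to right, bottom `m, …, 2m−1` right to left), together with a number
of belts (non-contractible loops, drawn as wall-to-wall strands). This is the fundamental
domain model of an affine symmetric TL diagram of period `2m`. -/
structure StripDiagram (m : ℕ) : Type where
  dest : ℕ → SDest
  belts : ℕ

/-- Two chords `{a,b}`, `{c,d}` on the boundary circle cross. -/
def chordsCross (a b c d : ℕ) : Prop :=
  (min a b < min c d ∧ min c d < max a b ∧ max a b < max c d) ∨
  (min c d < min a b ∧ min a b < max c d ∧ max c d < max a b)

/-- The chord `{c, j}` spans the eastern boundary gap (between points `m−1` and `m`). -/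
def SContainsE (m c j : ℕ) : Prop := min c j < m ∧ m ≤ max c j

/-- Planarity/well-formedness of a strip diagram: matching strands are involutive and
non-crossing, wall-exiting strands do not cross matching strands or each other, and
belts (wall-to-wall strands) are compatible with everything. -/
def StripWf (m : ℕ) (D : StripDiagram m) : Prop :=
  (∀ i, 2 * m ≤ i → D.dest i = SDest.pt i) ∧
  (∀ i j, i < 2 * m → D.dest i = SDest.pt j →
    j < 2 * m ∧ j ≠ i ∧ D.dest j = SDest.pt i) ∧
  (∀ i j i' j', i < 2 * m → i' < 2 * m → D.dest i = SDest.pt j →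
    D.dest i' = SDest.pt j' → ¬ chordsCross i j i' j') ∧
  (∀ i c j, i < 2 * m → c < 2 * m → D.dest i = SDest.west →
    D.dest c = SDest.pt j → ¬ (min c j < i ∧ i < max c j)) ∧
  (∀ i c j, i < 2 * m → c < 2 * m → D.dest i = SDest.east →
    D.dest c = SDest.pt j → ((min c j < i ∧ i < max c j) ↔ SContainsE m c j)) ∧
  (∀ i j, i < 2 * m → j < 2 * m → D.dest i = SDest.west → D.dest j = SDest.east →
    ¬ ((i < m ∧ j < i) ∨ (m ≤ i ∧ i < j))) ∧
  (1 ≤ D.belts → ∀ c j, c < 2 * m → D.dest c = SDest.pt j → ¬ SContainsE m c j)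

/-- Colouring-composability: the numbers of `0`-wall and `1`-wall crossings (including
belts) are even. -/
def CCcond (m : ℕ) (D : StripDiagram m) : Prop :=
  ({i : ℕ | i < 2 * m ∧ D.dest i = SDest.west}.ncard + D.belts) % 2 = 0 ∧
  ({i : ℕ | i < 2 * m ∧ D.dest i = SDest.east}.ncard + D.belts) % 2 = 0

/-- A basis diagram of the affine symmetric TL algebra `b^φ_{2m}`: a well-formed,
colouring-composable strip diagram with at most one belt (and none of the reducible
features, which the strip encoding cannot represent). -/
def SBasic (m : ℕ) (D : StripDiagram m) : Prop :=
  StripWf m D ∧ D.belts ≤ 1 ∧ CCcond m D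

section Glue

variable (m : ℕ) (D1 D2 : StripDiagram m)

/-- Point lookup in the two-layer concatenation of `D1` (layer `false`) over `D2`. -/
def ldest : Bool × ℕ → SDest := fun x => if x.1 then D2.dest x.2 else D1.dest x.2

/-- One step of connectivity in the concatenation: follow a strand of either layer, or
pass through the glued middle edge (bottom point `i` of `D1` is glued to top point
`2m−1−i` of `D2`). -/
inductive SStep : Bool × ℕ → Bool × ℕ → Prop
  | arc1 (i j : ℕ) (h : i < 2 * m) (hd : D1.dest i = SDest.pt j) :
      SStep (false, i) (false, j)
  | arc2 (i j : ℕ) (h : i < 2 * m) (hd : D2.dest i = SDest.pt j) :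
      SStep (true, i) (true, j)
  | glue (i : ℕ) (h1 : m ≤ i) (h2 : i < 2 * m) :
      SStep (false, i) (true, 2 * m - 1 - i)

/-- Connectivity in the concatenation. -/
def SConn : Bool × ℕ → Bool × ℕ → Prop := Relation.EqvGen (SStep m D1 D2)

/-- Boundary points of the concatenation: top of layer `1`, bottom of layer `2`. -/
def sBd (i : ℕ) : Bool × ℕ := if i < m then (false, i) else (true, i)

/-- `x` is a `0`-wall (west) end of the concatenation. -/
def isWEnd (x : Bool × ℕ) : Prop := x.2 < 2 * m ∧ ldest m D1 D2 x = SDest.west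

/-- `x` is a `1`-wall (east) end of the concatenation. -/
def isEEnd (x : Bool × ℕ) : Prop := x.2 < 2 * m ∧ ldest m D1 D2 x = SDest.east

/-- The component of `x` contains a boundary point of the concatenation. -/
def touchesBd (x : Bool × ℕ) : Prop := ∃ i, i < 2 * m ∧ SConn m D1 D2 x (sBd m i)

/-- Number of closed (contractible) loops formed in the concatenation: components
touching neither the boundary nor a wall, counted by their minimal middle point. -/
noncomputable def nLoops : ℕ :=
  {i : ℕ | m ≤ i ∧ i < 2 * m ∧ ¬ touchesBd m D1 D2 (false, i) ∧
    (¬ ∃ y, (isWEnd m D1 D2 y ∨ isEEnd m D1 D2 y) ∧ SConn m D1 D2 (false, i) y) ∧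
    (∀ j, m ≤ j → j < 2 * m → SConn m D1 D2 (false, i) (false, j) → i ≤ j)}.ncard

/-- The order of wall ends along a wall (layer `1` ends above layer `2` ends, and within
a layer in increasing circle index). -/
def lexLt (x y : Bool × ℕ) : Prop :=
  (x.1 = false ∧ y.1 = true) ∨ (x.1 = y.1 ∧ x.2 < y.2)

/-- Rank (from the top) of a west-wall end among all west-wall ends. -/
noncomputable def wRank (x : Bool × ℕ) : ℕ :=
  {y : Bool × ℕ | isWEnd m D1 D2 y ∧ lexLt y x}.ncard

/-- Rank of an east-wall end among all east-wall ends. -/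
noncomputable def eRank (x : Bool × ℕ) : ℕ :=
  {y : Bool × ℕ | isEEnd m D1 D2 y ∧ lexLt y x}.ncard

/-- `x` is the upper end of a loop astride the `0`-wall (a component with two west ends
and no boundary point). -/
def isWWTop (x : Bool × ℕ) : Prop :=
  isWEnd m D1 D2 x ∧ ¬ touchesBd m D1 D2 x ∧
  (¬ ∃ y, isEEnd m D1 D2 y ∧ SConn m D1 D2 x y) ∧
  (∀ y, isWEnd m D1 D2 y → SConn m D1 D2 x y → ¬ lexLt y x)

/-- `x` is the upper end of a loop astride the `1`-wall. -/
def isEETop (x : Bool × ℕ) : Prop :=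
  isEEnd m D1 D2 x ∧ ¬ touchesBd m D1 D2 x ∧
  (¬ ∃ y, isWEnd m D1 D2 y ∧ SConn m D1 D2 x y) ∧
  (∀ y, isEEnd m D1 D2 y → SConn m D1 D2 x y → ¬ lexLt y x)

/-- Number of white loops astride the `0`-wall (the region at the top of the `0`-wall is
white; the colour alternates with each wall crossing). -/
noncomputable def nWWwhite : ℕ :=
  {x : Bool × ℕ | isWWTop m D1 D2 x ∧ (wRank m D1 D2 x + 1) % 2 = 0}.ncard

/-- Number of black loops astride the `0`-wall. -/
noncomputable def nWWblack : ℕ :=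
  {x : Bool × ℕ | isWWTop m D1 D2 x ∧ (wRank m D1 D2 x + 1) % 2 = 1}.ncard

/-- Number of white loops astride the `1`-wall (the colour at the top of the `1`-wall
depends on the parity of `m`). -/
noncomputable def nEEwhite : ℕ :=
  {x : Bool × ℕ | isEETop m D1 D2 x ∧ (eRank m D1 D2 x + 1 + m) % 2 = 0}.ncard

/-- Number of black loops astride the `1`-wall. -/
noncomputable def nEEblack : ℕ :=
  {x : Bool × ℕ | isEETop m D1 D2 x ∧ (eRank m D1 D2 x + 1 + m) % 2 = 1}.ncard

/-- Number of new noncontractible loops (wall-to-wall strands) formed in the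
concatenation, counted by their west ends. -/
noncomputable def nWE : ℕ :=
  {x : Bool × ℕ | isWEnd m D1 D2 x ∧ ¬ touchesBd m D1 D2 x ∧
    ∃ y, isEEnd m D1 D2 y ∧ SConn m D1 D2 x y}.ncard

/-- The destination function of the composite diagram. -/
noncomputable def compDest : ℕ → SDest := fun i =>
  if i < 2 * m then
    if h : ∃ j, j < 2 * m ∧ j ≠ i ∧ SConn m D1 D2 (sBd m i) (sBd m j) then
      SDest.pt (Classical.choose h)
    else if ∃ y, isWEnd m D1 D2 y ∧ SConn m D1 D2 (sBd m i) y then SDest.west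
    else SDest.east
  else SDest.pt i

/-- Number of pairs of noncontractible loops removed (each contributing `κ_{LR}`). -/
noncomputable def beltPairs : ℕ := (D1.belts + D2.belts + nWE m D1 D2) / 2

/-- The composite (basic) diagram of the concatenation. -/
noncomputable def compStrip : StripDiagram m :=
  ⟨compDest m D1 D2, (D1.belts + D2.belts + nWE m D1 D2) % 2⟩

end Glue

/-- The scalar produced by reducing the features of the concatenation of two basic
diagrams, with parameters `δ, δ_L, δ_R, κ_L, κ_R, κ_{LR}`. -/
noncomputable def sCoeff {k : Type} [CommRing k] (δ δL δR κL κR κLR : k)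
    (m : ℕ) (D1 D2 : StripDiagram m) : k :=
  δ ^ nLoops m D1 D2 * δL ^ nWWwhite m D1 D2 * κL ^ nWWblack m D1 D2 *
    δR ^ nEEwhite m D1 D2 * κR ^ nEEblack m D1 D2 * κLR ^ beltPairs m D1 D2


/-- Number of propagating lines of a strip diagram. -/
noncomputable def propCount (m : ℕ) (D : StripDiagram m) : ℕ :=
  {i : ℕ | i < m ∧ ∃ j, D.dest i = SDest.pt j ∧ m ≤ j}.ncard

/-- The inner region of a (symmetric, affine) diagram is white iff the number of
northern `0`-wall exits is even. -/
def innerWhite (m : ℕ) (D : StripDiagram m) : Prop :=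
  Even ({i : ℕ | i < m ∧ D.dest i = SDest.west}.ncard)

/-- `D3` is the composite diagram of the concatenation of `D1` over `D2`. -/
def IsSComposite (m : ℕ) (D1 D2 D3 : StripDiagram m) : Prop :=
  (∀ i, 2 * m ≤ i → D3.dest i = SDest.pt i) ∧
  (∀ i j, i < 2 * m → j < 2 * m →
    (D3.dest i = SDest.pt j ↔ (i ≠ j ∧ SConn m D1 D2 (sBd m i) (sBd m j)))) ∧
  (∀ i, i < 2 * m →
    (D3.dest i = SDest.west ↔
      ∃ y, isWEnd m D1 D2 y ∧ SConn m D1 D2 (sBd m i) y)) ∧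
  (∀ i, i < 2 * m →
    (D3.dest i = SDest.east ↔
      ∃ y, isEEnd m D1 D2 y ∧ SConn m D1 D2 (sBd m i) y)) ∧
  D3.belts = (D1.belts + D2.belts + nWE m D1 D2) % 2

/-- If a northern point exits west in `D1`, it exits west in the composite. -/
lemma comp_west {m : ℕ} {D1 D2 D3 : StripDiagram m}
    (hc : IsSComposite m D1 D2 D3) {i : ℕ} (him : i < m)
    (hd : D1.dest i = SDest.west) : D3.dest i = SDest.west := by
  have h2m : i < 2 * m := by omega
  refine (hc.2.2.1 i h2m).mpr ⟨(false, i), ⟨h2m, ?_⟩, ?_⟩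
  · simpa [ldest] using hd
  · unfold SConn sBd
    rw [if_pos him]
    exact Relation.EqvGen.refl _

/-- If a northern point exits east in `D1`, it exits east in the composite. -/
lemma comp_east {m : ℕ} {D1 D2 D3 : StripDiagram m}
    (hc : IsSComposite m D1 D2 D3) {i : ℕ} (him : i < m)
    (hd : D1.dest i = SDest.east) : D3.dest i = SDest.east := by
  have h2m : i < 2 * m := by omega
  refine (hc.2.2.2.1 i h2m).mpr ⟨(false, i), ⟨h2m, ?_⟩, ?_⟩
  · simpa [ldest] using hd
  · unfold SConn sBd
    rw [if_pos him]
    exact Relation.EqvGen.refl _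

/-- If a northern point is joined to a northern point in `D1`, the same holds in the
composite. -/
lemma comp_pt {m : ℕ} {D1 D2 D3 : StripDiagram m}
    (hwf : StripWf m D1) (hc : IsSComposite m D1 D2 D3) {i j : ℕ}
    (him : i < m) (hjm : j < m) (hd : D1.dest i = SDest.pt j) :
    D3.dest i = SDest.pt j := by
  have h2m : i < 2 * m := by omega
  have hj2m : j < 2 * m := by omega
  have hinv := hwf.2.1 i j h2m hd
  refine (hc.2.1 i j h2m hj2m).mpr ⟨fun h => hinv.2.1 h.symm, ?_⟩
  unfold SConn sBd
  rw [if_pos him, if_pos hjm]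
  exact Relation.EqvGen.rel _ _ (SStep.arc1 i j h2m hd)

theorem stmt15 (m : ℕ) (D1 D2 D3 : StripDiagram m)
    (h1 : SBasic m D1) (h2 : SBasic m D2)
    (hc : IsSComposite m D1 D2 D3) :
    propCount m D3 ≤ propCount m D1 ∧
    (propCount m D3 = propCount m D1 → (innerWhite m D3 ↔ innerWhite m D1)) := by

  obtain ⟨hwf1, hb1, hcc1⟩ := h1
  have hsub : {i : ℕ | i < m ∧ ∃ j, D3.dest i = SDest.pt j ∧ m ≤ j} ⊆
      {i : ℕ | i < m ∧ ∃ j, D1.dest i = SDest.pt j ∧ m ≤ j} := by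
    rintro i ⟨him, j, hdij, hmj⟩
    refine ⟨him, ?_⟩
    rcases h : D1.dest i with j' | _ | _
    · have hj' : j' < 2 * m := (hwf1.2.1 i j' (by omega) h).1
      by_cases hj'm : m ≤ j'
      · exact ⟨j', rfl, hj'm⟩
      · have h3 := comp_pt hwf1 hc him (by omega) h
        rw [h3] at hdij
        injection hdij with hh
        omega
    · have h3 := comp_west hc him h
      rw [h3] at hdij
      simp at hdij
    · have h3 := comp_east hc him h
      rw [h3] at hdij
      simp at hdij
  have hfin1 : {i : ℕ | i < m ∧ ∃ j, D1.dest i = SDest.pt j ∧ m ≤ j}.Finite :=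
    (Set.finite_Iio m).subset fun x hx => hx.1
  have hle : propCount m D3 ≤ propCount m D1 := Set.ncard_le_ncard hsub hfin1
  refine ⟨hle, fun heq => ?_⟩
  have hSeq : {i : ℕ | i < m ∧ ∃ j, D3.dest i = SDest.pt j ∧ m ≤ j} =
      {i : ℕ | i < m ∧ ∃ j, D1.dest i = SDest.pt j ∧ m ≤ j} :=
    Set.eq_of_subset_of_ncard_le hsub (le_of_eq heq.symm) hfin1
  have hW : {i : ℕ | i < m ∧ D3.dest i = SDest.west} =
      {i : ℕ | i < m ∧ D1.dest i = SDest.west} := by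
    ext i
    simp only [Set.mem_setOf_eq]
    constructor
    · rintro ⟨him, hd3⟩
      refine ⟨him, ?_⟩
      rcases h : D1.dest i with j' | _ | _
      · have hj' : j' < 2 * m := (hwf1.2.1 i j' (by omega) h).1
        by_cases hj'm : m ≤ j'
        · have hi3 : i ∈ {i : ℕ | i < m ∧ ∃ j, D3.dest i = SDest.pt j ∧ m ≤ j} := by
            rw [hSeq]; exact ⟨him, j', h, hj'm⟩
          obtain ⟨-, j'', hd'', -⟩ := hi3
          rw [hd3] at hd''
          simp at hd''
        · have h3 := comp_pt hwf1 hc him (by omega) h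
          rw [h3] at hd3
          simp at hd3
      · rfl
      · have h3 := comp_east hc him h
        rw [h3] at hd3
        simp at hd3
    · rintro ⟨him, hd1⟩
      exact ⟨him, comp_west hc him hd1⟩
  unfold innerWhite
  rw [hW]
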